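/- Let T' be a rooted binary tree over leaf set G realizing a consistent dense set of rooted triplets, and a a new leaf such that the dense triplet set on G ∪ {a} is consistent. Then there exists a unique edge e of T' such that subdividing e and attaching a at the new node yields the tree realizing the triplet set on G ∪ {a}. -/

import Mathlib

/-- Rooted binary trees with leaves labelled by `V`. -/
inductive RTree (V : Type*) : Type _ where
  | leaf : V → RTree V
  | node : RTree V → RTree V → RTree V

namespace RTree

variable {V : Type*} [DecidableEq V]

/-- The list of leaf labels of a tree, from left to right. -/
def leafList : RTree V → List V
  | .leaf x => [x]
  | .node l r => l.leafList ++ r.leafList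

/-- The set of leaf labels of a tree. -/
def leaves (t : RTree V) : Finset V := t.leafList.toFinset

/-- A tree is proper when all its leaf labels are distinct. -/
def Proper (t : RTree V) : Prop := t.leafList.Nodup

/-- `Consistent T a b c` means that the rooted triplet `ab|c` is consistent
with `T`, i.e. the restriction of `T` to `{a, b, c}` is homeomorphic to the
rooted binary tree in which `a` and `b` are siblings below one child of the
root, the other child being `c`. -/
def Consistent : RTree V → V → V → V → Prop
  | .leaf _, _, _, _ => False
  | .node l r, a, b, c =>
      (a ∈ l.leaves ∧ b ∈ l.leaves ∧ c ∈ l.leaves ∧ Consistent l a b c) ∨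
      (a ∈ r.leaves ∧ b ∈ r.leaves ∧ c ∈ r.leaves ∧ Consistent r a b c) ∨
      (a ∈ l.leaves ∧ b ∈ l.leaves ∧ c ∈ r.leaves) ∨
      (a ∈ r.leaves ∧ b ∈ r.leaves ∧ c ∈ l.leaves)

end RTree

variable {V : Type*} [DecidableEq V]

/-- A dense rooted-triplet instance is encoded by a map `R` assigning to each
`3`-subset `{a, b, c}` its chosen apex: `R {a, b, c} = c` means that the
triplet `ab|c` belongs to the instance. Validity requires the apex to belong
to the `3`-set. -/
def TripletValid (R : Finset V → V) (S : Finset V) : Prop :=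
  ∀ a b c : V, a ∈ S → b ∈ S → c ∈ S → a ≠ b → a ≠ c → b ≠ c →
    R {a, b, c} ∈ ({a, b, c} : Finset V)

/-- `Realizes T R S`: every rooted triplet of the instance `R` on leaves of
`S` is consistent with the tree `T`. -/
def Realizes (T : RTree V) (R : Finset V → V) (S : Finset V) : Prop :=
  ∀ a b c : V, a ∈ S → b ∈ S → c ∈ S → a ≠ b → a ≠ c → b ≠ c →
    R {a, b, c} = c → T.Consistent a b c

/-- The instance `R` restricted to `S` is consistent: some rooted binary tree
over `S` realizes all its triplets. -/
def TripletConsistentOn (R : Finset V → V) (S : Finset V) : Prop :=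
  ∃ T : RTree V, T.Proper ∧ T.leaves = S ∧ Realizes T R S

/-- `Insertion a T T''` holds when `T''` is obtained from `T` by choosing an
edge of `T` (or the edge above the root), subdividing it, and attaching the
new leaf `a` at the created node. -/
inductive Insertion (a : V) : RTree V → RTree V → Prop where
  | here (t : RTree V) : Insertion a t (.node (.leaf a) t)
  | left {l l' : RTree V} (r : RTree V) :
      Insertion a l l' → Insertion a (.node l r) (.node l' r)
  | right (l : RTree V) {r r' : RTree V} :
      Insertion a r r' → Insertion a (.node l r) (.node l r')

/-!
A proper tree is determined up to flips by its leaf set and its rooted triplets, and a tree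
realizing a valid dense instance displays exactly the triplets of the instance. For existence,
delete `a` from a tree realizing the instance on `G ∪ {a}`: what remains realizes the instance on
`G`, so it is a flipped copy of `T'`, and undoing the deletion along the flips inserts `a` into
`T'`. For uniqueness, take `x` in the left and `y` in the right subtree of `T'`: attaching `a` above
the root, inside the left subtree or inside the right subtree displays `xy|a`, `ax|y` or `ay|x`
respectively, so the triplet on `{a, x, y}` fixes the side, and induction fixes the edge.
-/

set_option linter.unusedSectionVars false

namespace RTree

section Leaves

@[simp] theorem leaves_leaf (x : V) : (leaf x).leaves = {x} := by
  simp [leaves, leafList]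

theorem leaves_node (l r : RTree V) : (node l r).leaves = l.leaves ∪ r.leaves := by
  simp [leaves, leafList, List.toFinset_append]

@[simp] theorem mem_leaves_node {l r : RTree V} {x : V} :
    x ∈ (node l r).leaves ↔ x ∈ l.leaves ∨ x ∈ r.leaves := by
  rw [leaves_node, Finset.mem_union]

theorem leaves_nonempty : ∀ t : RTree V, t.leaves.Nonempty
  | leaf x => ⟨x, by simp⟩
  | node l _ => (leaves_nonempty l).mono (by simp [leaves_node])

theorem proper_node_iff {l r : RTree V} :
    (node l r).Proper ↔ l.Proper ∧ r.Proper ∧ Disjoint l.leaves r.leaves := by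
  simp only [Proper, leafList, List.nodup_append, leaves, List.disjoint_toFinset_iff_disjoint,
    List.disjoint_left, ne_eq, List.forall_mem_ne]

theorem Proper.left {l r : RTree V} (h : (node l r).Proper) : l.Proper :=
  (proper_node_iff.1 h).1

theorem Proper.right {l r : RTree V} (h : (node l r).Proper) : r.Proper :=
  (proper_node_iff.1 h).2.1

theorem Proper.not_mem_right {l r : RTree V} (h : (node l r).Proper) {x : V}
    (hx : x ∈ l.leaves) : x ∉ r.leaves :=
  Finset.disjoint_left.1 (proper_node_iff.1 h).2.2 hx

theorem eq_leaf_of_leaves_eq_singleton {t : RTree V} (hP : t.Proper) {x : V}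
    (h : t.leaves = {x}) : t = leaf x := by
  cases t with
  | leaf y => simpa using h
  | node l r =>
    obtain ⟨u, hu⟩ := l.leaves_nonempty
    obtain ⟨v, hv⟩ := r.leaves_nonempty
    have hux : u = x := Finset.mem_singleton.1 (h ▸ mem_leaves_node.2 (Or.inl hu))
    have hvx : v = x := Finset.mem_singleton.1 (h ▸ mem_leaves_node.2 (Or.inr hv))
    exact absurd (hvx.trans hux.symm ▸ hv) (hP.not_mem_right hu)

theorem Proper.swap {l r : RTree V} (h : (node l r).Proper) : (node r l).Proper := by
  obtain ⟨hl, hr, hd⟩ := proper_node_iff.1 h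
  exact proper_node_iff.2 ⟨hr, hl, hd.symm⟩

end Leaves

section Consistent

theorem Consistent.mem {t : RTree V} {a b c : V} (h : t.Consistent a b c) :
    a ∈ t.leaves ∧ b ∈ t.leaves ∧ c ∈ t.leaves := by
  cases t with
  | leaf => exact h.elim
  | node l r => simp only [mem_leaves_node]; rcases h with h | h | h | h <;> tauto

theorem consistent_comm {t : RTree V} {a b c : V} : t.Consistent a b c ↔ t.Consistent b a c := by
  induction t with
  | leaf => rfl
  | node l r ihl ihr => simp only [Consistent, ihl, ihr, and_left_comm (a := a ∈ _)]

theorem consistent_node_comm {l r : RTree V} {a b c : V} :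
    (node l r).Consistent a b c ↔ (node r l).Consistent a b c := by
  simp only [Consistent]; tauto

theorem consistent_node_iff_left {l r : RTree V} (hP : (node l r).Proper) {a b c : V}
    (ha : a ∈ l.leaves) (hb : b ∈ l.leaves) (hc : c ∈ l.leaves) :
    (node l r).Consistent a b c ↔ l.Consistent a b c := by
  have := hP.not_mem_right ha
  have := hP.not_mem_right hc
  simp only [Consistent]; tauto

theorem consistent_node_leaf {t : RTree V} {a x y : V} (hx : x ∈ t.leaves) (hy : y ∈ t.leaves) :
    (node (leaf a) t).Consistent x y a :=
  Or.inr (Or.inr (Or.inr ⟨hx, hy, by simp⟩))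

theorem not_consistent_node_of_mem_left_of_mem_right {l r : RTree V} (hP : (node l r).Proper)
    {a b c : V} (ha : a ∈ l.leaves) (hb : b ∈ r.leaves) : ¬ (node l r).Consistent a b c := by
  have := hP.not_mem_right ha
  have : b ∉ l.leaves := fun h => hP.not_mem_right h hb
  simp only [Consistent]; tauto

theorem Consistent.not_consistent_swap {t : RTree V} (hP : t.Proper) {a b c : V}
    (h : t.Consistent a b c) : ¬ t.Consistent a c b := by
  induction t with
  | leaf => exact h.elim
  | node l r ihl ihr =>
    have hlr := @hP.not_mem_right
    have hrl := @hP.swap.not_mem_right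
    have := ihl hP.left
    have := ihr hP.right
    simp only [Consistent] at h ⊢
    grind

end Consistent

section Triplets

def SameTriplets (s t : RTree V) : Prop :=
  ∀ x y z : V, x ≠ y → x ≠ z → y ≠ z → (s.Consistent x y z ↔ t.Consistent x y z)

theorem SameTriplets.symm {s t : RTree V} (h : SameTriplets s t) : SameTriplets t s :=
  fun x y z hxy hxz hyz => (h x y z hxy hxz hyz).symm

theorem SameTriplets.node_left {l r l' r' : RTree V} (hP : (node l r).Proper)
    (hP' : (node l' r').Proper) (hl : l.leaves = l'.leaves)
    (h : SameTriplets (node l r) (node l' r')) : SameTriplets l l' := by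
  intro x y z hxy hxz hyz
  by_cases hin : x ∈ l.leaves ∧ y ∈ l.leaves ∧ z ∈ l.leaves
  · obtain ⟨hx, hy, hz⟩ := hin
    rw [← consistent_node_iff_left hP hx hy hz, h x y z hxy hxz hyz,
      consistent_node_iff_left hP' (hl ▸ hx) (hl ▸ hy) (hl ▸ hz)]
  · exact iff_of_false (fun hc => hin hc.mem) (fun hc => hin (hl ▸ hc.mem))

theorem SameTriplets.node_right {l r l' r' : RTree V} (hP : (node l r).Proper)
    (hP' : (node l' r').Proper) (hr : r.leaves = r'.leaves)
    (h : SameTriplets (node l r) (node l' r')) : SameTriplets r r' :=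
  SameTriplets.node_left hP.swap hP'.swap hr fun x y z hxy hxz hyz => by
    rw [← consistent_node_comm, h x y z hxy hxz hyz, consistent_node_comm]

end Triplets

section FlipEquiv

inductive FlipEquiv : RTree V → RTree V → Prop where
  | leaf (x : V) : FlipEquiv (.leaf x) (.leaf x)
  | node {l l' r r' : RTree V} :
      FlipEquiv l l' → FlipEquiv r r' → FlipEquiv (.node l r) (.node l' r')
  | swap {l l' r r' : RTree V} :
      FlipEquiv l l' → FlipEquiv r r' → FlipEquiv (.node l r) (.node r' l')

theorem FlipEquiv.refl : ∀ t : RTree V, FlipEquiv t t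
  | .leaf x => .leaf x
  | .node l r => .node (FlipEquiv.refl l) (FlipEquiv.refl r)

theorem FlipEquiv.perm {s t : RTree V} (h : FlipEquiv s t) : s.leafList.Perm t.leafList := by
  induction h with
  | leaf x => rfl
  | node _ _ ihl ihr => exact ihl.append ihr
  | swap _ _ ihl ihr => exact (ihl.append ihr).trans List.perm_append_comm

theorem FlipEquiv.leaves_eq {s t : RTree V} (h : FlipEquiv s t) : s.leaves = t.leaves :=
  List.toFinset_eq_of_perm _ _ h.perm

theorem FlipEquiv.proper {s t : RTree V} (h : FlipEquiv s t) (hs : s.Proper) : t.Proper :=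
  h.perm.nodup_iff.1 hs

theorem FlipEquiv.consistent {s t : RTree V} (h : FlipEquiv s t) {a b c : V}
    (hc : s.Consistent a b c) : t.Consistent a b c := by
  induction h with
  | leaf x => exact hc
  | node hl hr ihl ihr =>
    simp only [Consistent, hl.leaves_eq, hr.leaves_eq] at hc ⊢
    rcases hc with ⟨h1, h2, h3, h4⟩ | ⟨h1, h2, h3, h4⟩ | h | h
    exacts [Or.inl ⟨h1, h2, h3, ihl h4⟩, Or.inr (Or.inl ⟨h1, h2, h3, ihr h4⟩),
      Or.inr (Or.inr (Or.inl h)), Or.inr (Or.inr (Or.inr h))]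
  | swap hl hr ihl ihr =>
    simp only [Consistent, hl.leaves_eq, hr.leaves_eq] at hc ⊢
    rcases hc with ⟨h1, h2, h3, h4⟩ | ⟨h1, h2, h3, h4⟩ | h | h
    exacts [Or.inr (Or.inl ⟨h1, h2, h3, ihl h4⟩), Or.inl ⟨h1, h2, h3, ihr h4⟩,
      Or.inr (Or.inr (Or.inr h)), Or.inr (Or.inr (Or.inl h))]

theorem leaves_left_subset_of_sameTriplets {l r l' r' : RTree V} (hP : (node l r).Proper)
    (hP' : (node l' r').Proper) (hL : (node l r).leaves = (node l' r').leaves)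
    (h : SameTriplets (node l r) (node l' r')) {u : V} (hu : u ∈ l.leaves)
    (hu' : u ∈ l'.leaves) : l.leaves ⊆ l'.leaves := by
  intro x hx
  obtain rfl | hux := eq_or_ne u x
  · exact hu'
  obtain ⟨z, hz⟩ := r.leaves_nonempty
  have hconsistent : (node l' r').Consistent u x z :=
    (h u x z hux (fun e => hP.not_mem_right hu (e ▸ hz)) (fun e => hP.not_mem_right hx (e ▸ hz))).1
      (Or.inr (Or.inr (Or.inl ⟨hu, hx, hz⟩)))
  have hx' : x ∈ (node l' r').leaves := hL ▸ mem_leaves_node.2 (Or.inl hx)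
  exact (mem_leaves_node.1 hx').resolve_right fun hxr' =>
    not_consistent_node_of_mem_left_of_mem_right hP' hu' hxr' hconsistent

theorem leaves_eq_of_sameTriplets {l r l' r' : RTree V} (hP : (node l r).Proper)
    (hP' : (node l' r').Proper) (hL : (node l r).leaves = (node l' r').leaves)
    (h : SameTriplets (node l r) (node l' r')) {u : V} (hu : u ∈ l.leaves)
    (hu' : u ∈ l'.leaves) : l.leaves = l'.leaves ∧ r.leaves = r'.leaves := by
  have hl : l.leaves = l'.leaves :=
    (leaves_left_subset_of_sameTriplets hP hP' hL h hu hu').antisymm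
      (leaves_left_subset_of_sameTriplets hP' hP hL.symm h.symm hu' hu)
  refine ⟨hl, ?_⟩
  rw [← Finset.union_sdiff_cancel_left (proper_node_iff.1 hP).2.2,
    ← Finset.union_sdiff_cancel_left (proper_node_iff.1 hP').2.2, ← leaves_node, ← leaves_node,
    hL, hl]

theorem flipEquiv_of_sameTriplets : ∀ {s t : RTree V}, s.Proper → t.Proper →
    s.leaves = t.leaves → SameTriplets s t → FlipEquiv s t
  | leaf x, t, _, ht, hL, _ => by
    rw [eq_leaf_of_leaves_eq_singleton ht (hL.symm.trans (leaves_leaf x))]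
    exact .leaf x
  | node l r, leaf y, hs, _, hL, _ => by
    cases eq_leaf_of_leaves_eq_singleton hs (hL.trans (leaves_leaf y))
  | node l r, node l' r', hs, ht, hL, h => by
    obtain ⟨u, hu⟩ := l.leaves_nonempty
    rcases mem_leaves_node.1 (hL ▸ mem_leaves_node.2 (Or.inl hu)) with hu' | hu'
    · obtain ⟨hl, hr⟩ := leaves_eq_of_sameTriplets hs ht hL h hu hu'
      exact .node (flipEquiv_of_sameTriplets hs.left ht.left hl (h.node_left hs ht hl))
        (flipEquiv_of_sameTriplets hs.right ht.right hr (h.node_right hs ht hr))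
    · have hL' : (node l r).leaves = (node r' l').leaves := by
        rw [hL, leaves_node, leaves_node, Finset.union_comm]
      have h' : SameTriplets (node l r) (node r' l') := fun x y z hxy hxz hyz => by
        rw [h x y z hxy hxz hyz, consistent_node_comm]
      obtain ⟨hl, hr⟩ := leaves_eq_of_sameTriplets hs ht.swap hL' h' hu hu'
      exact .swap (flipEquiv_of_sameTriplets hs.left ht.right hl (h'.node_left hs ht.swap hl))
        (flipEquiv_of_sameTriplets hs.right ht.left hr (h'.node_right hs ht.swap hr))

end FlipEquiv

end RTree

section Insertion

open RTree

variable {a : V}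

theorem Insertion.perm {t t' : RTree V} (h : Insertion a t t') :
    t'.leafList.Perm (a :: t.leafList) := by
  induction h with
  | here => rfl
  | left r _ ih => exact ih.append_right r.leafList
  | right l _ ih => exact (ih.append_left l.leafList).trans List.perm_middle

theorem Insertion.leaves_eq {t t' : RTree V} (h : Insertion a t t') :
    t'.leaves = insert a t.leaves := by
  simpa [leaves] using List.toFinset_eq_of_perm _ _ h.perm

theorem Insertion.proper_iff {t t' : RTree V} (h : Insertion a t t') :
    t'.Proper ↔ a ∉ t.leaves ∧ t.Proper := by
  rw [Proper, h.perm.nodup_iff, List.nodup_cons, leaves, List.mem_toFinset, Proper]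

theorem Insertion.consistent_of_ne {t t' : RTree V} (h : Insertion a t t') {b c d : V}
    (hb : b ≠ a) (hc : c ≠ a) (hd : d ≠ a) (hcons : t'.Consistent b c d) : t.Consistent b c d := by
  induction h with
  | here t =>
    simp only [Consistent, leaves_leaf, Finset.mem_singleton, hb, hd, and_self, and_false,
      false_and, or_self, or_false, false_or] at hcons
    exact hcons.2.2.2
  | left r h ih =>
    simp only [Consistent, h.leaves_eq, Finset.mem_insert, hb, hc, hd, false_or] at hcons ⊢
    rcases hcons with ⟨h1, h2, h3, h4⟩ | h | h | h
    exacts [Or.inl ⟨h1, h2, h3, ih h4⟩, Or.inr (Or.inl h), Or.inr (Or.inr (Or.inl h)),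
      Or.inr (Or.inr (Or.inr h))]
  | right l h ih =>
    simp only [Consistent, h.leaves_eq, Finset.mem_insert, hb, hc, hd, false_or] at hcons ⊢
    rcases hcons with h | ⟨h1, h2, h3, h4⟩ | h | h
    exacts [Or.inl h, Or.inr (Or.inl ⟨h1, h2, h3, ih h4⟩), Or.inr (Or.inr (Or.inl h)),
      Or.inr (Or.inr (Or.inr h))]

theorem Insertion.exists_of_flipEquiv {t₀ t₁ : RTree V} (h : Insertion a t₀ t₁) :
    ∀ {t : RTree V}, FlipEquiv t₀ t → ∃ t₂, Insertion a t t₂ ∧ FlipEquiv t₁ t₂ := by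
  induction h with
  | here s => exact fun he => ⟨_, .here _, .node (.leaf a) he⟩
  | left r _ ih =>
    intro t he
    cases he with
    | node hl hr =>
      obtain ⟨l₂, hins, he'⟩ := ih hl
      exact ⟨_, .left _ hins, .node he' hr⟩
    | swap hl hr =>
      obtain ⟨l₂, hins, he'⟩ := ih hl
      exact ⟨_, .right _ hins, .swap he' hr⟩
  | right l _ ih =>
    intro t he
    cases he with
    | node hl hr =>
      obtain ⟨r₂, hins, he'⟩ := ih hr
      exact ⟨_, .right _ hins, .node hl he'⟩
    | swap hl hr =>
      obtain ⟨r₂, hins, he'⟩ := ih hr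
      exact ⟨_, .left _ hins, .swap hl he'⟩

theorem exists_insertion_flipEquiv : ∀ {t : RTree V}, a ∈ t.leaves → t ≠ leaf a →
    ∃ t₀ t₁, Insertion a t₀ t₁ ∧ FlipEquiv t t₁
  | leaf x, ha, hne => absurd (by simpa using ha) (fun h : a = x => hne (h ▸ rfl))
  | node l r, ha, _ => by
    rcases mem_leaves_node.1 ha with hl | hr
    · by_cases hla : l = leaf a
      · subst hla
        exact ⟨r, _, .here r, .refl _⟩
      · obtain ⟨l₀, l₁, hins, he⟩ := exists_insertion_flipEquiv hl hla
        exact ⟨node l₀ r, node l₁ r, .left r hins, .node he (.refl r)⟩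
    · by_cases hra : r = leaf a
      · subst hra
        exact ⟨l, _, .here l, .swap (.refl l) (.leaf a)⟩
      · obtain ⟨r₀, r₁, hins, he⟩ := exists_insertion_flipEquiv hr hra
        exact ⟨node l r₀, node l r₁, .right l hins, .node (.refl l) he⟩

theorem Insertion.consistent_node_left {l l' : RTree V} (h : Insertion a l l') (r : RTree V)
    {x y : V} (hx : x ∈ l.leaves) (hy : y ∈ r.leaves) : (node l' r).Consistent a x y :=
  Or.inr (Or.inr (Or.inl ⟨by simp [h.leaves_eq], by simp [h.leaves_eq, hx], hy⟩))

theorem Insertion.consistent_node_right {r r' : RTree V} (h : Insertion a r r') (l : RTree V)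
    {x y : V} (hx : x ∈ l.leaves) (hy : y ∈ r.leaves) : (node l r').Consistent a y x :=
  consistent_node_comm.1 (h.consistent_node_left l hy hx)

theorem Insertion.eq_here_of_consistent {l r t' : RTree V} (h : Insertion a (node l r) t')
    (hP : t'.Proper) {x y : V} (hx : x ∈ l.leaves) (hy : y ∈ r.leaves)
    (hc : t'.Consistent x y a) : t' = node (leaf a) (node l r) := by
  cases h with
  | here => rfl
  | left _ hl =>
    exact absurd hc ((consistent_comm.1 (hl.consistent_node_left r hx hy)).not_consistent_swap hP)
  | right _ hr =>
    exact absurd (consistent_comm.1 hc)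
      ((consistent_comm.1 (hr.consistent_node_right l hx hy)).not_consistent_swap hP)

theorem Insertion.exists_left_of_consistent {l r t' : RTree V} (h : Insertion a (node l r) t')
    (hP : t'.Proper) {x y : V} (hx : x ∈ l.leaves) (hy : y ∈ r.leaves)
    (hc : t'.Consistent a x y) : ∃ l', Insertion a l l' ∧ t' = node l' r := by
  cases h with
  | here =>
    exact absurd (consistent_node_leaf (mem_leaves_node.2 (.inl hx)) (mem_leaves_node.2 (.inr hy)))
      ((consistent_comm.1 hc).not_consistent_swap hP)
  | left _ hl => exact ⟨_, hl, rfl⟩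
  | right _ hr => exact absurd (hr.consistent_node_right l hx hy) (hc.not_consistent_swap hP)

theorem Insertion.exists_right_of_consistent {l r t' : RTree V} (h : Insertion a (node l r) t')
    (hP : t'.Proper) {x y : V} (hx : x ∈ l.leaves) (hy : y ∈ r.leaves)
    (hc : t'.Consistent a y x) : ∃ r', Insertion a r r' ∧ t' = node l r' := by
  cases h with
  | here =>
    exact absurd (consistent_comm.1 (consistent_node_leaf (mem_leaves_node.2 (.inl hx))
      (mem_leaves_node.2 (.inr hy)))) ((consistent_comm.1 hc).not_consistent_swap hP)
  | left _ hl => exact absurd hc ((hl.consistent_node_left r hx hy).not_consistent_swap hP)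
  | right _ hr => exact ⟨_, hr, rfl⟩

theorem Insertion.eq_of_sameTriplets : ∀ {t t₁ t₂ : RTree V}, t.Proper → a ∉ t.leaves →
    Insertion a t t₁ → Insertion a t t₂ → SameTriplets t₁ t₂ → t₁ = t₂
  | leaf x, _, _, _, _, .here _, .here _, _ => rfl
  | node l r, t₁, t₂, hP, ha, h₁, h₂, h => by
    obtain ⟨x, hx⟩ := l.leaves_nonempty
    obtain ⟨y, hy⟩ := r.leaves_nonempty
    have hal : a ∉ l.leaves := fun h => ha (mem_leaves_node.2 (Or.inl h))
    have har : a ∉ r.leaves := fun h => ha (mem_leaves_node.2 (Or.inr h))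
    have hax : a ≠ x := fun e => hal (e ▸ hx)
    have hay : a ≠ y := fun e => har (e ▸ hy)
    have hxy : x ≠ y := fun e => hP.not_mem_right hx (e ▸ hy)
    have hP₁ : t₁.Proper := h₁.proper_iff.2 ⟨ha, hP⟩
    have hP₂ : t₂.Proper := h₂.proper_iff.2 ⟨ha, hP⟩
    cases h₁ with
    | here =>
      exact (h₂.eq_here_of_consistent hP₂ hx hy
        ((h x y a hxy hax.symm hay.symm).1
          (consistent_node_leaf (mem_leaves_node.2 (.inl hx)) (mem_leaves_node.2 (.inr hy))))).symm
    | left _ hl₁ =>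
      obtain ⟨l₂, hl₂, rfl⟩ := h₂.exists_left_of_consistent hP₂ hx hy
        ((h a x y hax hay hxy).1 (hl₁.consistent_node_left r hx hy))
      rw [Insertion.eq_of_sameTriplets hP.left hal hl₁ hl₂
        (h.node_left hP₁ hP₂ (hl₁.leaves_eq.trans hl₂.leaves_eq.symm))]
    | right _ hr₁ =>
      obtain ⟨r₂, hr₂, rfl⟩ := h₂.exists_right_of_consistent hP₂ hx hy
        ((h a y x hay hax hxy.symm).1 (hr₁.consistent_node_right l hx hy))
      rw [Insertion.eq_of_sameTriplets hP.right har hr₁ hr₂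
        (h.node_right hP₁ hP₂ (hr₁.leaves_eq.trans hr₂.leaves_eq.symm))]

end Insertion

section Realizes

open RTree

variable {R : Finset V → V} {S : Finset V}

theorem TripletValid.mono {S' : Finset V} (h : TripletValid R S') (hS : S ⊆ S') :
    TripletValid R S :=
  fun a b c ha hb hc => h a b c (hS ha) (hS hb) (hS hc)

theorem Realizes.of_flipEquiv {s t : RTree V} (hs : Realizes s R S) (h : FlipEquiv s t) :
    Realizes t R S :=
  fun a b c ha hb hc hab hac hbc hR => h.consistent (hs a b c ha hb hc hab hac hbc hR)

theorem Realizes.of_insertion {a : V} {t t' : RTree V} (h : Insertion a t t')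
    (ht' : Realizes t' R (insert a S)) (ha : a ∉ S) : Realizes t R S :=
  fun b c d hb hc hd hbc hbd hcd hR =>
    h.consistent_of_ne (ne_of_mem_of_not_mem hb ha) (ne_of_mem_of_not_mem hc ha)
      (ne_of_mem_of_not_mem hd ha) (ht' b c d (Finset.mem_insert_of_mem hb)
        (Finset.mem_insert_of_mem hc) (Finset.mem_insert_of_mem hd) hbc hbd hcd hR)

theorem Realizes.apex_eq {t : RTree V} (hP : t.Proper) (hval : TripletValid R S)
    (hreal : Realizes t R S) {x y z : V} (hx : x ∈ S) (hy : y ∈ S) (hz : z ∈ S)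
    (hxy : x ≠ y) (hxz : x ≠ z) (hyz : y ≠ z) (h : t.Consistent x y z) : R {x, y, z} = z := by
  have hmem := hval x y z hx hy hz hxy hxz hyz
  simp only [Finset.mem_insert, Finset.mem_singleton] at hmem
  rcases hmem with hapex | hapex | hapex
  · have hyzx : t.Consistent y z x :=
      hreal y z x hy hz hx hyz hxy.symm hxz.symm (by rwa [Finset.pair_comm, Finset.insert_comm])
    exact absurd hyzx ((consistent_comm.1 h).not_consistent_swap hP)
  · have hxzy : t.Consistent x z y :=
      hreal x z y hx hz hy hxz hxy hyz.symm (by rwa [Finset.pair_comm])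
    exact absurd hxzy (h.not_consistent_swap hP)
  · exact hapex

theorem Realizes.consistent_of_consistent {s t : RTree V} (hs : s.Proper) (hsS : s.leaves ⊆ S)
    (hval : TripletValid R S) (hrs : Realizes s R S) (hrt : Realizes t R S) {x y z : V}
    (hxy : x ≠ y) (hxz : x ≠ z) (hyz : y ≠ z) (h : s.Consistent x y z) : t.Consistent x y z := by
  obtain ⟨hx, hy, hz⟩ := h.mem
  exact hrt x y z (hsS hx) (hsS hy) (hsS hz) hxy hxz hyz
    (hrs.apex_eq hs hval (hsS hx) (hsS hy) (hsS hz) hxy hxz hyz h)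

theorem sameTriplets_of_realizes {s t : RTree V} (hs : s.Proper) (ht : t.Proper)
    (hsS : s.leaves ⊆ S) (htS : t.leaves ⊆ S) (hval : TripletValid R S)
    (hrs : Realizes s R S) (hrt : Realizes t R S) : SameTriplets s t :=
  fun _ _ _ hxy hxz hyz =>
    ⟨hrs.consistent_of_consistent hs hsS hval hrt hxy hxz hyz,
      hrt.consistent_of_consistent ht htS hval hrs hxy hxz hyz⟩

theorem Realizes.exists_insertion {a : V} {t : RTree V} (hP : t.Proper) (ha : a ∉ t.leaves)
    (hval : TripletValid R (insert a t.leaves)) (hreal : Realizes t R t.leaves)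
    (hcons : TripletConsistentOn R (insert a t.leaves)) :
    ∃ t', Insertion a t t' ∧ Realizes t' R (insert a t.leaves) := by
  obtain ⟨T, hTP, hTL, hTreal⟩ := hcons
  have hTa : T ≠ leaf a := by
    rintro rfl
    obtain ⟨x, hx⟩ := t.leaves_nonempty
    have hxa : x ∈ (leaf a).leaves := hTL ▸ Finset.mem_insert_of_mem hx
    rw [leaves_leaf, Finset.mem_singleton] at hxa
    exact ha (hxa ▸ hx)
  obtain ⟨T₀, T₁, hins, hT₁⟩ := exists_insertion_flipEquiv (hTL ▸ Finset.mem_insert_self _ _) hTa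
  obtain ⟨haT₀, hT₀P⟩ := hins.proper_iff.1 (hT₁.proper hTP)
  have hT₀L : T₀.leaves = t.leaves := calc
    T₀.leaves = (insert a T₀.leaves).erase a := (Finset.erase_insert haT₀).symm
    _ = (insert a t.leaves).erase a := by rw [← hins.leaves_eq, ← hT₁.leaves_eq, hTL]
    _ = t.leaves := Finset.erase_insert ha
  have hT₀real : Realizes T₀ R t.leaves := (hTreal.of_flipEquiv hT₁).of_insertion hins ha
  have hT₀t : FlipEquiv T₀ t := flipEquiv_of_sameTriplets hT₀P hP hT₀L <|
    sameTriplets_of_realizes hT₀P hP hT₀L.le le_rfl (hval.mono (Finset.subset_insert _ _))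
      hT₀real hreal
  obtain ⟨T₂, hins₂, hT₂⟩ := hins.exists_of_flipEquiv hT₀t
  exact ⟨T₂, hins₂, (hTreal.of_flipEquiv hT₁).of_flipEquiv hT₂⟩

theorem Insertion.eq_of_realizes {a : V} {t t₁ t₂ : RTree V} (hP : t.Proper) (ha : a ∉ t.leaves)
    (hval : TripletValid R (insert a t.leaves)) (h₁ : Insertion a t t₁) (h₂ : Insertion a t t₂)
    (hr₁ : Realizes t₁ R (insert a t.leaves)) (hr₂ : Realizes t₂ R (insert a t.leaves)) :
    t₁ = t₂ :=
  h₁.eq_of_sameTriplets hP ha h₂ <| sameTriplets_of_realizes (h₁.proper_iff.2 ⟨ha, hP⟩)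
    (h₂.proper_iff.2 ⟨ha, hP⟩) h₁.leaves_eq.le h₂.leaves_eq.le hval hr₁ hr₂

end Realizes

/-- Let `T'` be a rooted binary tree over leaf set `G` realizing a consistent
dense set of rooted triplets, and `a` a new leaf such that the dense triplet
set on `G ∪ {a}` is consistent. Then there is a unique edge of `T'` at which
`a` can be attached (after subdividing that edge) to yield the tree realizing
the triplet set on `G ∪ {a}`. -/
theorem unique_attachment_edge
    (R : Finset V → V) (G : Finset V) (a : V) (ha : a ∉ G)
    (hval : TripletValid R (insert a G))
    (T' : RTree V) (hP : T'.Proper) (hL : T'.leaves = G)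
    (hreal : Realizes T' R G)
    (hcons : TripletConsistentOn R (insert a G)) :
    ∃! T'' : RTree V, Insertion a T' T'' ∧ Realizes T'' R (insert a G) := by
  subst hL
  obtain ⟨T'', hins, hT''⟩ := hreal.exists_insertion hP ha hval hcons
  exact ⟨T'', ⟨hins, hT''⟩, fun T ⟨hinsT, hT⟩ => hinsT.eq_of_realizes hP ha hval hins hT hT''⟩
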